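/- arXiv:2103.08855 — 3 statements merged into one kernel-verified Lean document; each statement's English description precedes it below -/
import Mathlib

section
/- Let H be a real inner product space, q̂, h ∈ H with q̂ ≠ h, let D ≥ 0 and η ∈ [0,1], and set a = (1/2)‖q̂ - h‖², b = ⟨q̂, h⟩ - ‖h‖², c = (1/2)‖h‖² - (1/2)‖q̂‖² - η·D. Then b² - 4ac ≥ 0, ξ₀ := max{0, (-b - √(b² - 4ac))/(2a)} ∈ [0,1], and q := ξ₀·q̂ + (1-ξ₀)·h satisfies (1/2)‖q‖² - (1/2)‖q̂‖² ≤ η·D. -/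
open scoped RealInnerProductSpace

set_option maxHeartbeats 1000000 in
theorem stmt_3 {H : Type*} [NormedAddCommGroup H] [InnerProductSpace ℝ H]
    (qhat h : H) (hne : qhat ≠ h)
    (D η : ℝ) (hD : 0 ≤ D) (hη : η ∈ Set.Icc (0 : ℝ) 1)
    (a b c : ℝ)
    (ha : a = (1 / 2) * ‖qhat - h‖ ^ 2)
    (hb : b = ⟪qhat, h⟫ - ‖h‖ ^ 2)
    (hc : c = (1 / 2) * ‖h‖ ^ 2 - (1 / 2) * ‖qhat‖ ^ 2 - η * D) :
    0 ≤ b ^ 2 - 4 * a * c ∧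
    max 0 ((-b - Real.sqrt (b ^ 2 - 4 * a * c)) / (2 * a)) ∈ Set.Icc (0 : ℝ) 1 ∧
    (1 / 2) * ‖(max 0 ((-b - Real.sqrt (b ^ 2 - 4 * a * c)) / (2 * a))) • qhat +
        (1 - max 0 ((-b - Real.sqrt (b ^ 2 - 4 * a * c)) / (2 * a))) • h‖ ^ 2 -
      (1 / 2) * ‖qhat‖ ^ 2 ≤ η * D := by
  obtain ⟨hη0, hη1⟩ := hη
  have hnorm : ‖qhat - h‖ ^ 2 = ‖qhat‖ ^ 2 - 2 * ⟪qhat, h⟫ + ‖h‖ ^ 2 := by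
    rw [← norm_sub_sq_real]
  have hapos : 0 < a := by
    rw [ha]
    have : 0 < ‖qhat - h‖ := by
      simpa [sub_eq_zero] using hne
    positivity
  have hsum : a + b + c = -(η * D) := by
    rw [ha, hb, hc, hnorm]; ring
  have hηD : 0 ≤ η * D := mul_nonneg hη0 hD
  have hdisc : (2 * a + b) ^ 2 ≤ b ^ 2 - 4 * a * c := by nlinarith
  have hdisc0 : 0 ≤ b ^ 2 - 4 * a * c := le_trans (sq_nonneg _) hdisc
  set s := Real.sqrt (b ^ 2 - 4 * a * c) with hs
  have hs0 : 0 ≤ s := Real.sqrt_nonneg _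
  have hssq : s ^ 2 = b ^ 2 - 4 * a * c := Real.sq_sqrt hdisc0
  have hsge : |2 * a + b| ≤ s := by
    rw [← Real.sqrt_sq_eq_abs]
    exact Real.sqrt_le_sqrt hdisc
  have hsge' : -(2 * a + b) ≤ s := le_trans (neg_le_abs _) hsge
  set ξ := (-b - s) / (2 * a) with hξ
  have h2a : (2 : ℝ) * a ≠ 0 := by positivity
  have hξ1 : ξ ≤ 1 := by
    rw [hξ, div_le_one (by positivity)]
    linarith
  set m := max 0 ξ with hm
  have hm0 : 0 ≤ m := le_max_left _ _
  have hm1 : m ≤ 1 := max_le (by norm_num) hξ1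
  have hfm : a * m ^ 2 + b * m + c ≤ 0 := by
    rcases le_or_gt 0 ξ with hc0 | hc0
    · have : m = ξ := max_eq_right hc0
      rw [this, hξ]
      have : a * ((-b - s) / (2 * a)) ^ 2 + b * ((-b - s) / (2 * a)) + c = 0 := by
        field_simp
        nlinarith [hssq]
      linarith
    · have hmz : m = 0 := max_eq_left hc0.le
      rw [hmz]
      have hbs : 0 < b + s := by
        have := (div_neg_iff).mp hc0
        rcases this with ⟨h1, h2⟩ | ⟨h1, h2⟩
        · linarith
        · linarith
      have hbs2 : b - s ≤ -(2 * a) := by linarith [le_abs_self (2 * a + b), hsge]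
      have h4ac : 4 * a * c = (b - s) * (b + s) := by
        rw [show (b - s) * (b + s) = b ^ 2 - s ^ 2 from by ring, hssq]; ring
      have hle : (b - s) * (b + s) ≤ 0 :=
        mul_nonpos_of_nonpos_of_nonneg (by linarith) hbs.le
      nlinarith
  refine ⟨hdisc0, ⟨hm0, hm1⟩, ?_⟩
  have hexp : ‖m • qhat + (1 - m) • h‖ ^ 2 =
      m ^ 2 * ‖qhat‖ ^ 2 + 2 * (m * (1 - m)) * ⟪qhat, h⟫ + (1 - m) ^ 2 * ‖h‖ ^ 2 := by
    rw [norm_add_sq_real, norm_smul, norm_smul, real_inner_smul_left, real_inner_smul_right]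
    simp only [Real.norm_eq_abs, sq_abs, mul_pow]
    ring
  rw [hexp]
  nlinarith [hfm, hsum]
end

section
/- Let H be a real inner product space, q̂, h, qⁿ ∈ H with q̂ ≠ h, D ≥ 0, η ∈ [0,1]. Set a = (5/4)‖q̂ - h‖², b = (1/2)⟨q̂ - h, h⟩ + ⟨q̂ - h, 2h - qⁿ⟩, c = (1/4)(‖h‖² + ‖2h - qⁿ‖² - ‖q̂‖² - ‖2q̂ - qⁿ‖²) - η·D. Then b² - 4ac ≥ 0 and ξ₀ := max{0, (-b - √(b² - 4ac))/(2a)} ∈ [0,1], and q := ξ₀·q̂ + (1-ξ₀)·h satisfies (1/4)(‖q‖² + ‖2q - qⁿ‖²) - (1/4)(‖q̂‖² + ‖2q̂ - qⁿ‖²) ≤ η·D. -/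
open scoped RealInnerProductSpace

/-- Expansion of the relaxation functional along the segment from `h` to `qhat`. -/
lemma relax_expand {H : Type*} [NormedAddCommGroup H] [InnerProductSpace ℝ H]
    (qhat h qn : H) (ξ : ℝ) :
    (1 / 4) * (‖ξ • qhat + (1 - ξ) • h‖ ^ 2 +
        ‖(2 : ℝ) • (ξ • qhat + (1 - ξ) • h) - qn‖ ^ 2) -
      (1 / 4) * (‖qhat‖ ^ 2 + ‖(2 : ℝ) • qhat - qn‖ ^ 2) =
    ((5 / 4) * ‖qhat - h‖ ^ 2) * ξ ^ 2 +
      ((1 / 2) * ⟪qhat - h, h⟫ + ⟪qhat - h, (2 : ℝ) • h - qn⟫) * ξ +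
      (1 / 4) * (‖h‖ ^ 2 + ‖(2 : ℝ) • h - qn‖ ^ 2 - ‖qhat‖ ^ 2 -
        ‖(2 : ℝ) • qhat - qn‖ ^ 2) := by
  simp only [← real_inner_self_eq_norm_sq, inner_add_left, inner_add_right,
    inner_sub_left, inner_sub_right, real_inner_smul_left, real_inner_smul_right,
    real_inner_comm h qhat, real_inner_comm qn qhat, real_inner_comm qn h]
  ring

/-- The purely real-number part of the argument. -/
lemma relax_real (a b c e : ℝ) (ha : 0 < a) (hs : a + b + c = -e) (he : 0 ≤ e) :
    0 ≤ b ^ 2 - 4 * a * c ∧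
    max 0 ((-b - Real.sqrt (b ^ 2 - 4 * a * c)) / (2 * a)) ∈ Set.Icc (0 : ℝ) 1 ∧
    a * (max 0 ((-b - Real.sqrt (b ^ 2 - 4 * a * c)) / (2 * a))) ^ 2 +
      b * (max 0 ((-b - Real.sqrt (b ^ 2 - 4 * a * c)) / (2 * a))) + c ≤ 0 := by
  have hf1 : a + b + c ≤ 0 := by rw [hs]; linarith
  have hΔge : (2 * a + b) ^ 2 ≤ b ^ 2 - 4 * a * c := by nlinarith
  have hΔ0 : (0 : ℝ) ≤ b ^ 2 - 4 * a * c := le_trans (sq_nonneg _) hΔge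
  set t := Real.sqrt (b ^ 2 - 4 * a * c) with ht
  have ht0 : 0 ≤ t := Real.sqrt_nonneg _
  have ht2 : t ^ 2 = b ^ 2 - 4 * a * c := Real.sq_sqrt hΔ0
  have htabs : |2 * a + b| ≤ t := by
    rw [ht, ← Real.sqrt_sq_eq_abs]
    exact Real.sqrt_le_sqrt hΔge
  have htge : -(2 * a + b) ≤ t := le_trans (neg_le_abs _) htabs
  have htge' : 2 * a + b ≤ t := le_trans (le_abs_self _) htabs
  set r := (-b - t) / (2 * a) with hr
  have h2a : 0 < 2 * a := by linarith
  have hr1 : r ≤ 1 := by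
    rw [hr, div_le_one h2a]; linarith
  refine ⟨hΔ0, ⟨le_max_left _ _, max_le (by norm_num) hr1⟩, ?_⟩
  rcases le_or_gt 0 r with h0 | h0
  · rw [max_eq_right h0]
    have hroot : 2 * a * r = -b - t := by
      rw [hr]; field_simp
    nlinarith [ht2, sq_nonneg r]
  · rw [max_eq_left h0.le]
    have hbt : -b - t < 0 := by
      by_contra hcon
      push_neg at hcon
      have : 0 ≤ r := div_nonneg hcon h2a.le
      linarith
    have hpos : 0 < t + b := by linarith
    have hpos' : 0 < t - b := by linarith
    nlinarith [mul_pos hpos hpos', ht2]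

theorem stmt_5 {H : Type*} [NormedAddCommGroup H] [InnerProductSpace ℝ H]
    (qhat h qn : H) (hne : qhat ≠ h)
    (D η : ℝ) (hD : 0 ≤ D) (hη : η ∈ Set.Icc (0 : ℝ) 1)
    (a b c : ℝ)
    (ha : a = (5 / 4) * ‖qhat - h‖ ^ 2)
    (hb : b = (1 / 2) * ⟪qhat - h, h⟫ + ⟪qhat - h, (2 : ℝ) • h - qn⟫)
    (hc : c = (1 / 4) * (‖h‖ ^ 2 + ‖(2 : ℝ) • h - qn‖ ^ 2 - ‖qhat‖ ^ 2 -
      ‖(2 : ℝ) • qhat - qn‖ ^ 2) - η * D) :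
    0 ≤ b ^ 2 - 4 * a * c ∧
    max 0 ((-b - Real.sqrt (b ^ 2 - 4 * a * c)) / (2 * a)) ∈ Set.Icc (0 : ℝ) 1 ∧
    (1 / 4) * (‖(max 0 ((-b - Real.sqrt (b ^ 2 - 4 * a * c)) / (2 * a))) • qhat +
          (1 - max 0 ((-b - Real.sqrt (b ^ 2 - 4 * a * c)) / (2 * a))) • h‖ ^ 2 +
        ‖(2 : ℝ) • ((max 0 ((-b - Real.sqrt (b ^ 2 - 4 * a * c)) / (2 * a))) • qhat +
          (1 - max 0 ((-b - Real.sqrt (b ^ 2 - 4 * a * c)) / (2 * a))) • h) - qn‖ ^ 2) -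
      (1 / 4) * (‖qhat‖ ^ 2 + ‖(2 : ℝ) • qhat - qn‖ ^ 2) ≤ η * D := by
  have hηD : 0 ≤ η * D := mul_nonneg hη.1 hD
  have hapos : 0 < a := by
    rw [ha]
    have : 0 < ‖qhat - h‖ := norm_pos_iff.mpr (sub_ne_zero.mpr hne)
    positivity
  -- the quadratic vanishes (up to -ηD) at ξ = 1
  have h1 := relax_expand qhat h qn 1
  simp only [one_smul, sub_self, zero_smul, add_zero, one_pow, mul_one] at h1
  have hsum : a + b + c = -(η * D) := by
    rw [ha, hb, hc]; linarith
  obtain ⟨hdisc, hmem, hquad⟩ := relax_real a b c (η * D) hapos hsum hηD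
  refine ⟨hdisc, hmem, ?_⟩
  have hξ := relax_expand qhat h qn
    (max 0 ((-b - Real.sqrt (b ^ 2 - 4 * a * c)) / (2 * a)))
  rw [hξ]
  rw [ha, hb, hc] at hquad ⊢
  linarith
end

section
/- Let H be a real inner product space, q̂, h ∈ H, D ≥ 0, η ∈ [0,1], a = (1/2)‖q̂-h‖² > 0, b = ⟨q̂,h⟩ - ‖h‖², c = (1/2)‖h‖² - (1/2)‖q̂‖² - ηD. If ηD = 0 and ξ₀ = max{0, (-b-√(b²-4ac))/(2a)}, then the relaxed value q = ξ₀q̂ + (1-ξ₀)h satisfies ‖q‖ ≤ ‖q̂‖. -/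
/-!
Along the segment `t ↦ t • q̂ + (1 - t) • h` the energy gap `½‖q‖² - ½‖q̂‖²` equals
`a t² + b t + c + ηD`. When `ηD = 0` this quadratic vanishes at `t = 1` (where `q = q̂`),
so `1` lies between its two real roots. Hence `max 0 ξ₋`, with `ξ₋` the smaller root, also lies
between the roots, where the upward parabola is nonpositive.
-/

open scoped RealInnerProductSpace

section Quadratic

variable {a b c x : ℝ}

lemma four_mul_quadratic_eq (a b c x : ℝ) :
    4 * a * (a * (x * x) + b * x + c) = (2 * a * x + b) ^ 2 - discrim a b c := by
  rw [discrim]; ring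

lemma quadratic_nonpos_iff_sq_le_discrim (ha : 0 < a) :
    a * (x * x) + b * x + c ≤ 0 ↔ (2 * a * x + b) ^ 2 ≤ discrim a b c := by
  have h4a : 0 < 4 * a := by positivity
  have key := four_mul_quadratic_eq a b c x
  constructor
  · intro h
    linarith [mul_nonpos_of_nonneg_of_nonpos h4a.le h]
  · intro h
    exact nonpos_of_mul_nonpos_right (by linarith) h4a

lemma quadratic_nonpos_iff_mem_Icc_roots (ha : 0 < a) :
    a * (x * x) + b * x + c ≤ 0 ↔ 0 ≤ discrim a b c ∧
      x ∈ Set.Icc ((-b - √(discrim a b c)) / (2 * a)) ((-b + √(discrim a b c)) / (2 * a)) := by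
  have h2a : 0 < 2 * a := by positivity
  rw [quadratic_nonpos_iff_sq_le_discrim ha, Set.mem_Icc, div_le_iff₀ h2a, le_div_iff₀ h2a]
  constructor
  · intro h
    have hd : 0 ≤ discrim a b c := (sq_nonneg _).trans h
    obtain ⟨hlo, hhi⟩ := (Real.sq_le hd).1 h
    exact ⟨hd, by linarith, by linarith⟩
  · rintro ⟨hd, hlo, hhi⟩
    exact (Real.sq_le hd).2 ⟨by linarith, by linarith⟩

lemma quadratic_max_zero_smaller_root_nonpos (ha : 0 < a) {x₀ : ℝ} (hx₀ : 0 ≤ x₀)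
    (hpx₀ : a * (x₀ * x₀) + b * x₀ + c ≤ 0) :
    let ξ := max 0 ((-b - √(discrim a b c)) / (2 * a))
    a * (ξ * ξ) + b * ξ + c ≤ 0 := by
  obtain ⟨hd, hlo, hhi⟩ := (quadratic_nonpos_iff_mem_Icc_roots ha).1 hpx₀
  exact (quadratic_nonpos_iff_mem_Icc_roots ha).2
    ⟨hd, le_max_right _ _, max_le (hx₀.trans hhi) (hlo.trans hhi)⟩

end Quadratic

lemma norm_smul_add_one_sub_smul_sq {H : Type*} [NormedAddCommGroup H] [InnerProductSpace ℝ H]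
    (u v : H) (t : ℝ) :
    ‖t • u + (1 - t) • v‖ ^ 2 = ‖u - v‖ ^ 2 * (t * t) + 2 * (⟪u, v⟫ - ‖v‖ ^ 2) * t + ‖v‖ ^ 2 := by
  have hseg : t • u + (1 - t) • v = v + t • (u - v) := by
    rw [smul_sub, sub_smul, one_smul]; abel
  rw [hseg, norm_add_sq_real, norm_smul, inner_smul_right, inner_sub_right, real_inner_comm v u,
    real_inner_self_eq_norm_sq, mul_pow, Real.norm_eq_abs, sq_abs]
  ring

theorem stmt_17_general {H : Type*} [NormedAddCommGroup H] [InnerProductSpace ℝ H]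
    (qhat h : H) (D η : ℝ)
    (a b c : ℝ)
    (ha : a = (1 / 2) * ‖qhat - h‖ ^ 2) (hapos : 0 < a)
    (hb : b = ⟪qhat, h⟫ - ‖h‖ ^ 2)
    (hc : c = (1 / 2) * ‖h‖ ^ 2 - (1 / 2) * ‖qhat‖ ^ 2 - η * D)
    (hzero : η * D = 0) :
    ‖(max 0 ((-b - Real.sqrt (b ^ 2 - 4 * a * c)) / (2 * a))) • qhat +
        (1 - max 0 ((-b - Real.sqrt (b ^ 2 - 4 * a * c)) / (2 * a))) • h‖ ≤ ‖qhat‖ := by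
  have hc' : c = (1 / 2) * ‖h‖ ^ 2 - (1 / 2) * ‖qhat‖ ^ 2 := by rw [hc, hzero, sub_zero]
  have gap (t : ℝ) : ‖t • qhat + (1 - t) • h‖ ^ 2 = 2 * (a * (t * t) + b * t + c) + ‖qhat‖ ^ 2 := by
    rw [norm_smul_add_one_sub_smul_sq, ha, hb, hc']; ring
  have hone : a * (1 * 1) + b * 1 + c ≤ 0 := by
    have := gap 1
    rw [one_smul, sub_self, zero_smul, add_zero] at this
    linarith
  have hξ := quadratic_max_zero_smaller_root_nonpos hapos zero_le_one hone
  rw [discrim] at hξ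
  refine pow_le_pow_iff_left₀ (norm_nonneg _) (norm_nonneg _) two_ne_zero |>.1 ?_
  rw [gap]
  linarith

theorem stmt_17 {H : Type*} [NormedAddCommGroup H] [InnerProductSpace ℝ H]
    (qhat h : H) (D η : ℝ) (hD : 0 ≤ D) (hη : η ∈ Set.Icc (0 : ℝ) 1)
    (a b c : ℝ)
    (ha : a = (1 / 2) * ‖qhat - h‖ ^ 2) (hapos : 0 < a)
    (hb : b = ⟪qhat, h⟫ - ‖h‖ ^ 2)
    (hc : c = (1 / 2) * ‖h‖ ^ 2 - (1 / 2) * ‖qhat‖ ^ 2 - η * D)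
    (hzero : η * D = 0) :
    ‖(max 0 ((-b - Real.sqrt (b ^ 2 - 4 * a * c)) / (2 * a))) • qhat +
        (1 - max 0 ((-b - Real.sqrt (b ^ 2 - 4 * a * c)) / (2 * a))) • h‖ ≤ ‖qhat‖ :=
  stmt_17_general qhat h D η a b c ha hapos hb hc hzero
end
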